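/- arXiv:1202.1797 — 7 statements merged into one kernel-verified Lean document; each statement's English description precedes it below -/
import Mathlib

section
/- Let X be a positive bounded operator on a complex Hilbert space H whose range is closed, let P be the orthogonal projection of H onto the range of X, and let T be a bounded operator on H such that the commutator T X − X T is a compact operator. Then T P − P T is a compact operator. -/
/-!
For `ε > 0` the operator `X (X + ε)⁻¹` has compact commutator with `T`, because
`[T, (X + ε)⁻¹] = -(X + ε)⁻¹ [T, X] (X + ε)⁻¹`. Since the range of `X` is closed, `X` is bounded
below on it, say `‖w‖ ≤ K ‖X w‖`, and then `X (X + ε)⁻¹ - P = -ε (X + ε)⁻¹ P` has norm at most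
`ε K`. So `P` is a norm limit of operators with compact commutator, and compact operators form a
closed set.
-/

open Filter Topology ContinuousLinearMap
open scoped InnerProductSpace NNReal Ring

theorem Commute.ringInverse_right {M₀ : Type*} [MonoidWithZero M₀] {a b : M₀}
    (h : Commute a b) : Commute a b⁻¹ʳ := by
  by_cases hb : IsUnit b
  · obtain ⟨u, rfl⟩ := hb
    simpa using h.units_inv_right
  · simp [Ring.inverse_non_unit _ hb]

section Commutator

variable {𝕜 E : Type*} [NontriviallyNormedField 𝕜] [NormedAddCommGroup E] [NormedSpace 𝕜 E]

theorem IsCompactOperator.mul_clm {A : E →L[𝕜] E} (hA : IsCompactOperator A) (B : E →L[𝕜] E) :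
    IsCompactOperator ⇑(A * B) :=
  hA.comp_clm B

theorem IsCompactOperator.clm_mul (A : E →L[𝕜] E) {B : E →L[𝕜] E} (hB : IsCompactOperator B) :
    IsCompactOperator ⇑(A * B) :=
  hB.clm_comp A

variable {T : E →L[𝕜] E}

theorem isCompactOperator_commutator_mul {A B : E →L[𝕜] E}
    (hA : IsCompactOperator ⇑(T * A - A * T)) (hB : IsCompactOperator ⇑(T * B - B * T)) :
    IsCompactOperator ⇑(T * (A * B) - A * B * T) := by
  have h : T * (A * B) - A * B * T = (T * A - A * T) * B + A * (T * B - B * T) := by noncomm_ring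
  rw [h, FunLike.coe_add]
  exact (hA.mul_clm B).add (hB.clm_mul A)

theorem isCompactOperator_commutator_ringInverse {A : E →L[𝕜] E} (hA : IsUnit A)
    (h : IsCompactOperator ⇑(T * A - A * T)) :
    IsCompactOperator ⇑(T * A⁻¹ʳ - A⁻¹ʳ * T) := by
  have hAS : A * A⁻¹ʳ = 1 := Ring.mul_inverse_cancel A hA
  have hSA : A⁻¹ʳ * A = 1 := Ring.inverse_mul_cancel A hA
  have hcomm : T * A⁻¹ʳ - A⁻¹ʳ * T = -(A⁻¹ʳ * (T * A - A * T) * A⁻¹ʳ) := by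
    calc T * A⁻¹ʳ - A⁻¹ʳ * T = A⁻¹ʳ * A * T * A⁻¹ʳ - A⁻¹ʳ * T * (A * A⁻¹ʳ) := by
          rw [hSA, hAS, one_mul, mul_one]
      _ = _ := by noncomm_ring
  rw [hcomm, FunLike.coe_neg]
  exact ((h.clm_mul _).mul_clm _).neg

theorem isCompactOperator_commutator_of_tendsto [CompleteSpace E] {ι : Type*} {l : Filter ι}
    [l.NeBot] {F : ι → E →L[𝕜] E} {P : E →L[𝕜] E} (hF : Tendsto F l (𝓝 P))
    (h : ∀ᶠ i in l, IsCompactOperator ⇑(T * F i - F i * T)) :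
    IsCompactOperator ⇑(T * P - P * T) :=
  isCompactOperator_of_tendsto ((hF.const_mul T).sub (hF.mul_const T)) h

end Commutator

section InnerProductSpace

variable {𝕜 E : Type*} [RCLike 𝕜] [NormedAddCommGroup E] [InnerProductSpace 𝕜 E]

theorem IsSelfAdjoint.exists_norm_le_mul_norm_apply [CompleteSpace E] {X : E →L[𝕜] E}
    (hX : IsSelfAdjoint X) (hXr : IsClosed (Set.range X)) :
    ∃ K : ℝ≥0, ∀ w ∈ X.range, ‖w‖ ≤ K * ‖X w‖ := by
  -- `X` restricted to its range is injective with the same closed range, hence antilipschitz.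
  set R := X.range
  have hker : Rᗮ = X.ker := by
    simpa only [hX.adjoint_eq] using X.orthogonal_range
  have : CompleteSpace R := hXr.completeSpace_coe
  have hinj : Function.Injective (X ∘L R.subtypeL) := by
    refine (injective_iff_map_eq_zero _).mpr fun w hw => Subtype.ext ?_
    have hw' : (w : E) ∈ R ⊓ Rᗮ := ⟨w.2, hker ▸ hw⟩
    simpa [R.inf_orthogonal_eq_bot] using hw'
  have hrange : Set.range (X ∘L R.subtypeL) = Set.range X := by
    refine subset_antisymm (by rintro _ ⟨w, rfl⟩; exact ⟨w, rfl⟩) ?_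
    rintro _ ⟨y, rfl⟩
    obtain ⟨u, hu, v, hv, rfl⟩ := R.exists_add_mem_mem_orthogonal y
    refine ⟨⟨u, hu⟩, ?_⟩
    have : X v = 0 := by rw [hker] at hv; exact hv
    simp [this]
  obtain ⟨K, hK⟩ := (X ∘L R.subtypeL).antilipschitz_of_injective_of_isClosed_range hinj
    (hrange ▸ hXr)
  exact ⟨K, fun w hw => hK.le_mul_norm (map_zero _) ⟨w, hw⟩⟩

namespace ContinuousLinearMap.IsPositive

variable {X : E →L[𝕜] E}

theorem mul_norm_sq_le_re_inner_add_smul_one_apply (hX : X.IsPositive) (ε : ℝ) (w : E) :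
    ε * ‖w‖ ^ 2 ≤ RCLike.re ⟪(X + (ε : 𝕜) • 1) w, w⟫_𝕜 := by
  have := hX.re_inner_nonneg_left w
  simp only [add_apply, smul_apply, one_apply_eq_self, inner_add_left,
    inner_smul_left, map_add, RCLike.conj_ofReal, RCLike.re_ofReal_mul, inner_self_eq_norm_sq]
  linarith

theorem norm_apply_le_norm_add_smul_one_apply (hX : X.IsPositive) {ε : ℝ} (hε : 0 ≤ ε) (w : E) :
    ‖X w‖ ≤ ‖(X + (ε : 𝕜) • 1) w‖ := by
  have hre : 0 ≤ RCLike.re ⟪X w, (ε : 𝕜) • w⟫_𝕜 := by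
    rw [inner_smul_right, RCLike.re_ofReal_mul]
    exact mul_nonneg hε (hX.re_inner_nonneg_left w)
  have hsq : ‖X w‖ ^ 2 ≤ ‖(X + (ε : 𝕜) • 1) w‖ ^ 2 := by
    rw [add_apply, smul_apply, one_apply_eq_self, norm_add_sq (𝕜 := 𝕜)]
    nlinarith [sq_nonneg ‖(ε : 𝕜) • w‖]
  exact (pow_le_pow_iff_left₀ (norm_nonneg _) (norm_nonneg _) two_ne_zero).mp hsq

variable [CompleteSpace E]

theorem isUnit_add_smul_one (hX : X.IsPositive) {ε : ℝ} (hε : 0 < ε) :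
    IsUnit (X + (ε : 𝕜) • 1) :=
  isUnit_of_forall_le_norm_inner_map _ (c := ⟨ε, hε.le⟩) hε fun w =>
    calc ‖w‖ ^ 2 * ε ≤ RCLike.re ⟪(X + (ε : 𝕜) • 1) w, w⟫_𝕜 := by
          rw [mul_comm]; exact hX.mul_norm_sq_le_re_inner_add_smul_one_apply ε w
      _ ≤ _ := RCLike.re_le_norm _

theorem norm_ringInverse_add_smul_one_apply_le
    (hX : X.IsPositive) {K : ℝ≥0} (hK : ∀ w ∈ X.range, ‖w‖ ≤ K * ‖X w‖)
    {ε : ℝ} (hε : 0 < ε) {v : E} (hv : v ∈ X.range) :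
    ‖(X + (ε : 𝕜) • 1)⁻¹ʳ v‖ ≤ K * ‖v‖ := by
  set w := (X + (ε : 𝕜) • 1)⁻¹ʳ v
  have hAw : X w + (ε : 𝕜) • w = v := by
    have := congr($(Ring.mul_inverse_cancel _ (hX.isUnit_add_smul_one (𝕜 := 𝕜) hε)) v)
    simpa [w] using this
  have hw : w ∈ X.range := by
    have : w = (ε : 𝕜)⁻¹ • (v - X w) := by
      rw [← hAw, add_sub_cancel_left, smul_smul, inv_mul_cancel₀ (by exact_mod_cast hε.ne'),
        one_smul]
    rw [this]
    exact X.range.smul_mem _ (X.range.sub_mem hv ⟨w, rfl⟩)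
  calc ‖w‖ ≤ K * ‖X w‖ := hK w hw
    _ ≤ K * ‖v‖ := by
      gcongr
      simpa [hAw] using hX.norm_apply_le_norm_add_smul_one_apply (𝕜 := 𝕜) hε.le w

theorem tendsto_mul_ringInverse_add_smul_one
    (hX : X.IsPositive) (hXr : IsClosed (Set.range X)) {P : E →L[𝕜] E} (hP : IsStarProjection P)
    (hPX : P.range = X.range) :
    Tendsto (fun ε : ℝ => X * (X + (ε : 𝕜) • 1)⁻¹ʳ) (𝓝[>] 0) (𝓝 P) := by
  obtain ⟨K, hK⟩ := hX.isSelfAdjoint.exists_norm_le_mul_norm_apply hXr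
  have hPX_eq : P * X = X := by
    ext h
    exact (LinearMap.IsIdempotentElem.mem_range_iff hP.isIdempotentElem.toLinearMap).mp
      (hPX ▸ ⟨h, rfl⟩)
  have hXP_eq : X * P = X := by
    simpa [hP.isSelfAdjoint.star_eq, hX.isSelfAdjoint.star_eq] using congr(star $hPX_eq)
  have hbound : ∀ ε : ℝ, 0 < ε → ‖X * (X + (ε : 𝕜) • 1)⁻¹ʳ - P‖ ≤ ε * K := by
    intro ε hε
    set A := X + (ε : 𝕜) • 1
    have hPA : P * A = X + (ε : 𝕜) • P := by simp [A, mul_add, hPX_eq]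
    have hPS : Commute P A⁻¹ʳ := by
      refine Commute.ringInverse_right ?_
      simp [Commute, SemiconjBy, hPA, A, add_mul, hXP_eq]
    have hdiff : X * A⁻¹ʳ - P = -((ε : 𝕜) • (A⁻¹ʳ * P)) := by
      calc X * A⁻¹ʳ - P = X * A⁻¹ʳ - P * A * A⁻¹ʳ := by
            rw [mul_assoc, Ring.mul_inverse_cancel _ (hX.isUnit_add_smul_one hε), mul_one]
        _ = -((ε : 𝕜) • (P * A⁻¹ʳ)) := by
            rw [hPA, add_mul, smul_mul_assoc]
            abel
        _ = _ := by rw [hPS.eq]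
    rw [hdiff, norm_neg, norm_smul, RCLike.norm_ofReal, abs_of_pos hε]
    gcongr
    refine opNorm_le_bound _ K.2 fun h => ?_
    calc ‖A⁻¹ʳ (P h)‖ ≤ K * ‖P h‖ :=
          hX.norm_ringInverse_add_smul_one_apply_le hK hε (hPX ▸ ⟨h, rfl⟩)
      _ ≤ K * ‖h‖ := by
          gcongr
          exact (P.le_opNorm h).trans (mul_le_of_le_one_left (norm_nonneg h) (hP.norm_le))
  rw [tendsto_iff_norm_sub_tendsto_zero]
  refine squeeze_zero' (Eventually.of_forall fun _ => norm_nonneg _)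
    (eventually_nhdsWithin_of_forall hbound) ?_
  simpa using (tendsto_nhdsWithin_of_tendsto_nhds (tendsto_id.mul_const (K : ℝ)) :
    Tendsto (fun ε : ℝ => ε * K) (𝓝[>] 0) (𝓝 (0 * K)))

end ContinuousLinearMap.IsPositive

end InnerProductSpace

/-- If `X` is a positive operator with closed range on a complex Hilbert
space, `P` is the orthogonal projection onto the range of `X` (a self-adjoint idempotent with
range equal to the range of `X`), and `T` is a bounded operator such that `T X - X T` is
compact, then `T P - P T` is compact. -/
theorem stmt_2 {H : Type*} [NormedAddCommGroup H] [InnerProductSpace ℂ H] [CompleteSpace H]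
    (X : H →L[ℂ] H) (hX : X.IsPositive) (hXr : IsClosed (Set.range ⇑X))
    (P : H →L[ℂ] H)
    (hP : IsSelfAdjoint P ∧ IsIdempotentElem P ∧ LinearMap.range (P : H →ₗ[ℂ] H) = LinearMap.range (X : H →ₗ[ℂ] H))
    (T : H →L[ℂ] H) (hT : IsCompactOperator ⇑(T * X - X * T)) :
    IsCompactOperator ⇑(T * P - P * T) := by
  obtain ⟨hPsa, hPidem, hPX⟩ := hP
  refine isCompactOperator_commutator_of_tendsto
    (hX.tendsto_mul_ringInverse_add_smul_one hXr ⟨hPidem, hPsa⟩ hPX) ?_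
  filter_upwards [self_mem_nhdsWithin] with ε (hε : 0 < ε)
  have hTA : T * (X + (ε : ℂ) • 1) - (X + (ε : ℂ) • 1) * T = T * X - X * T := by
    simp only [mul_add, add_mul, mul_smul_comm, smul_mul_assoc, mul_one, one_mul]
    abel
  exact isCompactOperator_commutator_mul hT
    (isCompactOperator_commutator_ringInverse (hX.isUnit_add_smul_one hε) (hTA ▸ hT))
end

section
/- Let H be a complex Hilbert space, let T be a bounded operator on H, and let N_1, …, N_n be closed subspaces of H with orthogonal projections P_{N_1}, …, P_{N_n} such that each commutator T P_{N_i} − P_{N_i} T (1 ≤ i ≤ n) is a compact operator and such that the algebraic sum N = N_1 + ⋯ + N_n is closed. Then, with P_N the orthogonal projection onto N, the commutator T P_N − P_N T is a compact operator. -/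
/-!
Let `M = N₁ + ⋯ + Nₙ`. Since `M` is closed, the summation map `⊕ Nᵢ → M` is a bounded surjection
between Hilbert spaces, so by the open mapping theorem it has a bounded right inverse. Composing it
with `P_M` writes `P_M = ∑ Pᵢ Aᵢ` with bounded `Aᵢ`, and taking adjoints `P_M = ∑ Aᵢ* Pᵢ`. As
`P_M Pᵢ = Pᵢ = Pᵢ P_M`, this gives `(1 - P_M) T P_M = ∑ (1 - P_M) [T, Pᵢ] Aᵢ` and
`P_M T (1 - P_M) = -∑ Aᵢ* [T, Pᵢ] (1 - P_M)`, both compact, and their difference is `[T, P_M]`.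
-/

open ContinuousLinearMap

namespace TwoSidedIdeal

variable {R ι : Type*} [Ring R] (I : TwoSidedIdeal R) (s : Finset ι) {T Q : R} {P : ι → R}

theorem one_sub_mul_mul_mem (hQP : ∀ i ∈ s, Q * P i = P i) (A : ι → R)
    (hA : Q = ∑ i ∈ s, P i * A i) (hT : ∀ i ∈ s, T * P i - P i * T ∈ I) :
    (1 - Q) * T * Q ∈ I := by
  have hterm : ∀ i ∈ s, (1 - Q) * T * (P i * A i) = (1 - Q) * (T * P i - P i * T) * A i := by
    intro i hi
    have hkill : (1 - Q) * P i = 0 := by rw [sub_mul, one_mul, hQP i hi, sub_self]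
    calc (1 - Q) * T * (P i * A i)
        = (1 - Q) * (T * P i - P i * T) * A i + (1 - Q) * P i * (T * A i) := by noncomm_ring
      _ = (1 - Q) * (T * P i - P i * T) * A i := by rw [hkill, zero_mul, add_zero]
  have key : (1 - Q) * T * Q = ∑ i ∈ s, (1 - Q) * (T * P i - P i * T) * A i := by
    rw [← Finset.sum_congr rfl hterm, ← Finset.mul_sum, ← hA]
  rw [key]
  exact sum_mem fun i hi => I.mul_mem_right _ _ (I.mul_mem_left _ _ (hT i hi))

theorem mul_mul_one_sub_mem (hPQ : ∀ i ∈ s, P i * Q = P i) (B : ι → R)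
    (hB : Q = ∑ i ∈ s, B i * P i) (hT : ∀ i ∈ s, T * P i - P i * T ∈ I) :
    Q * T * (1 - Q) ∈ I := by
  have hterm : ∀ i ∈ s, B i * P i * T * (1 - Q) = B i * (P i * T - T * P i) * (1 - Q) := by
    intro i hi
    have hkill : P i * (1 - Q) = 0 := by rw [mul_sub, mul_one, hPQ i hi, sub_self]
    calc B i * P i * T * (1 - Q)
        = B i * (P i * T - T * P i) * (1 - Q) + B i * T * (P i * (1 - Q)) := by noncomm_ring
      _ = B i * (P i * T - T * P i) * (1 - Q) := by rw [hkill, mul_zero, add_zero]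
  have key : Q * T * (1 - Q) = ∑ i ∈ s, B i * (P i * T - T * P i) * (1 - Q) := by
    rw [← Finset.sum_congr rfl hterm, ← Finset.sum_mul, ← Finset.sum_mul, ← hB]
  rw [key]
  refine sum_mem fun i hi => I.mul_mem_right _ _ (I.mul_mem_left _ _ ?_)
  simpa only [neg_sub] using I.neg_mem (hT i hi)

theorem mul_sub_mul_mem_of_eq_sum (hQP : ∀ i ∈ s, Q * P i = P i) (hPQ : ∀ i ∈ s, P i * Q = P i)
    (A B : ι → R) (hA : Q = ∑ i ∈ s, P i * A i) (hB : Q = ∑ i ∈ s, B i * P i)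
    (hT : ∀ i ∈ s, T * P i - P i * T ∈ I) : T * Q - Q * T ∈ I := by
  have h := I.sub_mem (I.one_sub_mul_mul_mem s hQP A hA hT) (I.mul_mul_one_sub_mem s hPQ B hB hT)
  rwa [show (1 - Q) * T * Q - Q * T * (1 - Q) = T * Q - Q * T by noncomm_ring] at h

end TwoSidedIdeal

section CompactOperator

variable (𝕜 E : Type*) [NontriviallyNormedField 𝕜] [NormedAddCommGroup E] [NormedSpace 𝕜 E]

def compactOperatorIdeal : TwoSidedIdeal (E →L[𝕜] E) :=
  .mk' {T | IsCompactOperator T} isCompactOperator_zero .add .neg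
    (fun {S _} hT => hT.clm_comp S) (fun {_ S} hT => hT.comp_clm S)

variable {𝕜 E} in
@[simp]
theorem mem_compactOperatorIdeal {T : E →L[𝕜] E} :
    T ∈ compactOperatorIdeal 𝕜 E ↔ IsCompactOperator T :=
  TwoSidedIdeal.mem_mk' _ _ _ _ _ _ _

end CompactOperator

theorem ContinuousLinearMap.IsIdempotentElem.mul_eq_right_of_range_le {R M : Type*} [Semiring R]
    [TopologicalSpace M] [AddCommMonoid M] [Module R M] {p q : M →L[R] M}
    (hp : IsIdempotentElem p) (hqp : q.range ≤ p.range) : p * q = q :=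
  coe_inj.1 <| (LinearMap.IsIdempotentElem.comp_eq_right_iff
    (isIdempotentElem_toLinearMap_iff.2 hp) (q : M →ₗ[R] M)).2 hqp

section Hilbert

variable {𝕜 E F : Type*} [RCLike 𝕜] [NormedAddCommGroup E] [InnerProductSpace 𝕜 E]
  [CompleteSpace E] [NormedAddCommGroup F] [NormedSpace 𝕜 F] [CompleteSpace F]

theorem ContinuousLinearMap.HasRightInverse.of_surjective {f : E →L[𝕜] F}
    (hf : Function.Surjective f) : f.HasRightInverse := by
  -- `x ↦ (f x, P_{ker f} x)` is a bounded bijection `E → F × ker f`, so open mapping inverts it.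
  have : CompleteSpace f.ker := f.isClosed_ker.completeSpace_coe
  let g := f.ker.orthogonalProjectionOnto
  have hg : g.range = ⊤ := LinearMap.range_eq_top.2 fun y =>
    ⟨y, Submodule.orthogonalProjectionOnto_mem_subspace_eq_self y⟩
  let e := f.equivProdOfSurjectiveOfIsCompl g (LinearMap.range_eq_top.2 hf) hg
    (by rw [Submodule.ker_orthogonalProjectionOnto]; exact f.ker.isCompl_orthogonal)
  refine ⟨e.symm.toContinuousLinearMap ∘L inl 𝕜 F f.ker, fun y => ?_⟩
  have h := congrArg Prod.fst (e.apply_symm_apply (y, 0))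
  rwa [equivProdOfSurjectiveOfIsCompl_apply] at h

namespace Submodule

variable {ι : Type*} [Fintype ι] {N : ι → Submodule 𝕜 E}

theorem exists_sum_coe_eq_of_isClosed_sum (hN : ∀ i, IsClosed (N i : Set E))
    (hsum : IsClosed ((∑ i, N i : Submodule 𝕜 E) : Set E)) :
    ∃ S : (∑ i, N i : Submodule 𝕜 E) →L[𝕜] PiLp 2 (fun i => N i),
      ∀ x, ∑ i, (S x i : E) = x := by
  have : ∀ i, CompleteSpace (N i) := fun i => (hN i).completeSpace_coe
  have : CompleteSpace (∑ i, N i : Submodule 𝕜 E) := hsum.completeSpace_coe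
  let φ : PiLp 2 (fun i => N i) →L[𝕜] E := ∑ i, (N i).subtypeL ∘L PiLp.proj 2 (fun i => N i) i
  have hφ : ∀ v, φ v = ∑ i, (v i : E) := fun v => by simp [φ]
  have hrange : ∑ i, N i ≤ φ.range := by
    refine Finset.sum_induction _ (· ≤ φ.range) (fun _ _ ha hb => ?_) bot_le fun i _ x hx => ?_
    · rw [Submodule.add_eq_sup]; exact sup_le ha hb
    · classical
      refine ⟨WithLp.toLp 2 (Pi.single i ⟨x, hx⟩), ?_⟩
      rw [coe_coe, hφ, Finset.sum_eq_single_of_mem i (Finset.mem_univ i) fun j _ hj => by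
        simp [Pi.single_eq_of_ne hj]]
      simp
  let φM := φ.codRestrict _ fun v => (hφ v).symm ▸ sum_mem fun i _ =>
    Finset.single_le_sum (f := N) (fun _ _ => zero_le) (Finset.mem_univ i) (v i).2
  obtain ⟨S, hS⟩ := HasRightInverse.of_surjective (f := φM) fun x => by
    obtain ⟨v, hv⟩ := hrange x.2
    exact ⟨v, Subtype.ext hv⟩
  exact ⟨S, fun x => by rw [← hφ]; exact congrArg Subtype.val (hS x)⟩

theorem exists_sum_eq_of_range_le_sum {G : Type*} [NormedAddCommGroup G] [NormedSpace 𝕜 G]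
    (hN : ∀ i, IsClosed (N i : Set E)) (hsum : IsClosed ((∑ i, N i : Submodule 𝕜 E) : Set E))
    (X : G →L[𝕜] E) (hX : X.range ≤ ∑ i, N i) :
    ∃ A : ι → G →L[𝕜] E, (∀ i, (A i).range ≤ N i) ∧ ∑ i, A i = X := by
  obtain ⟨S, hS⟩ := exists_sum_coe_eq_of_isClosed_sum hN hsum
  let XM := X.codRestrict _ fun x => hX ⟨x, rfl⟩
  refine ⟨fun i => (N i).subtypeL ∘L PiLp.proj 2 (fun i => N i) i ∘L S ∘L XM,
    fun i => ?_, ContinuousLinearMap.ext fun x => ?_⟩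
  · rintro _ ⟨x, rfl⟩
    exact Subtype.coe_prop _
  · simp only [sum_apply, comp_apply]
    exact hS (XM x)

end Submodule

end Hilbert

/-- If `T` essentially commutes (modulo compacts) with the orthogonal
projections onto closed subspaces `N 1, …, N n`, and the algebraic sum `N = N 1 + ⋯ + N n`
(the submodule sum `∑ i, N i`) is closed, then `T` essentially commutes with the orthogonal
projection onto `N`. -/
theorem stmt_3 {H : Type*} [NormedAddCommGroup H] [InnerProductSpace ℂ H] [CompleteSpace H]
    {n : ℕ} (T : H →L[ℂ] H) (N : Fin n → Submodule ℂ H)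
    (hNc : ∀ i, IsClosed ((N i : Set H)))
    (P : Fin n → H →L[ℂ] H)
    (hP : ∀ i, IsSelfAdjoint (P i) ∧ IsIdempotentElem (P i) ∧ LinearMap.range (P i).toLinearMap = N i)
    (hcomm : ∀ i, IsCompactOperator ⇑(T * P i - P i * T))
    (hclosed : IsClosed ((∑ i, N i : Submodule ℂ H) : Set H))
    (Q : H →L[ℂ] H)
    (hQ : IsSelfAdjoint Q ∧ IsIdempotentElem Q ∧ LinearMap.range (Q : H →L[ℂ] H).toLinearMap = ∑ i, N i) :
    IsCompactOperator ⇑(T * Q - Q * T) := by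
  obtain ⟨A, hAN, hAQ⟩ := Submodule.exists_sum_eq_of_range_le_sum hNc hclosed Q hQ.2.2.le
  have hPA : ∀ i, P i * A i = A i := fun i =>
    IsIdempotentElem.mul_eq_right_of_range_le (hP i).2.1 ((hAN i).trans (hP i).2.2.ge)
  have hQP : ∀ i, Q * P i = P i := fun i => by
    refine IsIdempotentElem.mul_eq_right_of_range_le hQ.2.1 ?_
    rw [(hP i).2.2, hQ.2.2]
    exact Finset.single_le_sum (f := N) (fun _ _ => zero_le) (Finset.mem_univ i)
  have hPQ : ∀ i, P i * Q = P i := fun i => by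
    simpa only [star_mul, (hP i).1.star_eq, hQ.1.star_eq] using congrArg star (hQP i)
  have hA : Q = ∑ i, P i * A i := by simp only [hPA, hAQ]
  have hB : Q = ∑ i, star (A i) * P i := by
    rw [← hQ.1.star_eq, hA, star_sum]
    exact Finset.sum_congr rfl fun i _ => by rw [star_mul, (hP i).1.star_eq]
  rw [← mem_compactOperatorIdeal]
  exact (compactOperatorIdeal ℂ H).mul_sub_mul_mem_of_eq_sum Finset.univ
    (fun i _ => hQP i) (fun i _ => hPQ i) A (fun i => star (A i)) hA hB
    fun i _ => mem_compactOperatorIdeal.2 (hcomm i)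
end

section
/- Let n ≥ 2 and let N_1, …, N_n be closed subspaces of a complex Hilbert space H, not all equal to the closure N of their algebraic sum N_1 + ⋯ + N_n. Then c(N_1, …, N_n) = (n/(n−1)) · ‖(1/n)(P_{N_1} + ⋯ + P_{N_n}) − P_N‖ − 1/(n−1), where the norm is the operator norm and P_{N_i}, P_N are the orthogonal projections onto N_i and N respectively. -/
/-!
Write `S = P_N - (1/n) ∑ P_{N_i}`. On `N` one has `⟪S y, y⟫ = (1/n) ∑ ‖y - P_{N_i} y‖²`, and
`P_{N_i} P_N = P_{N_i}`, so `S` is a positive operator and `‖S‖` is the supremum of its Rayleigh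
quotient over `N`. For `x_i ∈ N_iᗮ ∩ N` the numerator of the cosine quotient is
`‖∑ x_i‖² - ∑ ‖x_i‖²`. Upper bound: with `y = ∑ x_i`, `‖y‖² = ∑ ⟪x_i, y - P_{N_i} y⟫`, and
Cauchy–Schwarz gives `‖y‖² ≤ n ‖S‖ ∑ ‖x_i‖²`. Lower bound: for `y ∈ N` the family
`x_i = y - P_{N_i} y` has `∑ x_i = n S y` and `∑ ‖x_i‖² = n ⟪S y, y⟫`, so its quotient
`‖∑ x_i‖² / ∑ ‖x_i‖²` is at least `n` times the Rayleigh quotient of `S` at `y`.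
-/

/-- The cosine `c(N₁, …, Nₙ)` of a finite family of subspaces of a complex Hilbert space. -/
noncomputable def cosine {H : Type*} [NormedAddCommGroup H] [InnerProductSpace ℂ H]
    {n : ℕ} (N : Fin n → Submodule ℂ H) : ℝ :=
  sSup {c : ℝ | ∃ x : Fin n → H,
    (∀ i, x i ∈ (N i)ᗮ ⊓ (∑ j, N j).topologicalClosure) ∧ x ≠ 0 ∧
    c = (1 / ((n : ℝ) - 1)) *
        (∑ i, ∑ j ∈ Finset.univ.erase i, ((inner ℂ (x i) (x j) : ℂ)).re) /
        (∑ i, ‖x i‖ ^ 2)}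

section

open RCLike Finset

variable {𝕜 E ι : Type*} [RCLike 𝕜] [NormedAddCommGroup E] [InnerProductSpace 𝕜 E]

local notation "⟪" x ", " y "⟫" => inner 𝕜 x y

theorem sum_sum_erase_re_inner [Fintype ι] [DecidableEq ι] (x : ι → E) :
    ∑ i, ∑ j ∈ univ.erase i, re ⟪x i, x j⟫ = ‖∑ i, x i‖ ^ 2 - ∑ i, ‖x i‖ ^ 2 := by
  have hrow (i : ι) : ∑ j, re ⟪x i, x j⟫ = ‖x i‖ ^ 2 + ∑ j ∈ univ.erase i, re ⟪x i, x j⟫ := by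
    rw [← add_sum_erase _ _ (mem_univ i), inner_self_eq_norm_sq]
  rw [← inner_self_eq_norm_sq (𝕜 := 𝕜), sum_inner, map_sum]
  simp only [inner_sum, map_sum, hrow, sum_add_distrib]
  ring

theorem sum_norm_sq_pos [Fintype ι] {x : ι → E} (hx : x ≠ 0) : 0 < ∑ i, ‖x i‖ ^ 2 := by
  obtain ⟨i, hi⟩ := Function.ne_iff.mp hx
  exact sum_pos' (fun j _ => sq_nonneg _) ⟨i, mem_univ i, pow_pos (norm_pos_iff.mpr hi) 2⟩

theorem IsStarProjection.exists_eq_starProjection [CompleteSpace E] {p : E →L[𝕜] E}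
    (hp : IsStarProjection p) {K : Submodule 𝕜 E} (hK : LinearMap.range (p : E →ₗ[𝕜] E) = K) :
    ∃ _ : K.HasOrthogonalProjection, p = K.starProjection := by
  subst hK
  exact isStarProjection_iff_eq_starProjection_range.mp hp

theorem ContinuousLinearMap.IsPositive.exists_lt_rayleighQuotient {T : E →L[𝕜] E}
    (hT : T.IsPositive) {t : ℝ} (ht : t < ‖T‖) : ∃ x, t < T.rayleighQuotient x := by
  rw [T.norm_eq_iSup_rayleighQuotient hT.isSymmetric] at ht
  obtain ⟨x, hx⟩ := exists_lt_of_lt_ciSup ht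
  exact ⟨x, hx.trans_eq (abs_of_nonneg (div_nonneg (hT.2 x) (sq_nonneg _)))⟩

theorem ContinuousLinearMap.rayleighQuotient_mul_reApplyInnerSelf_le (T : E →L[𝕜] E) (x : E) :
    T.rayleighQuotient x * T.reApplyInnerSelf x ≤ ‖T x‖ ^ 2 := by
  rcases eq_or_ne x 0 with rfl | hx
  · simp
  have hle : |T.reApplyInnerSelf x| ≤ ‖T x‖ * ‖x‖ :=
    (abs_re_le_norm _).trans (norm_inner_le_norm _ _)
  rw [rayleighQuotient, div_mul_eq_mul_div, div_le_iff₀ (by positivity), ← sq, ← sq_abs]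
  calc |T.reApplyInnerSelf x| ^ 2 ≤ (‖T x‖ * ‖x‖) ^ 2 := by gcongr
    _ = ‖T x‖ ^ 2 * ‖x‖ ^ 2 := mul_pow _ _ _

namespace Submodule

theorem norm_sub_starProjection_sq (U : Submodule 𝕜 E) [U.HasOrthogonalProjection] (x : E) :
    ‖x - U.starProjection x‖ ^ 2 = ‖x‖ ^ 2 - ‖U.starProjection x‖ ^ 2 := by
  rw [norm_sq_eq_add_norm_sq_starProjection x U, starProjection_orthogonal_val]
  ring

variable [Fintype ι] (K : ι → Submodule 𝕜 E) [∀ i, (K i).HasOrthogonalProjection]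
  (M : Submodule 𝕜 E) [M.HasOrthogonalProjection]

noncomputable def projDefect : E →L[𝕜] E :=
  M.starProjection - (Fintype.card ι : 𝕜)⁻¹ • ∑ i, (K i).starProjection

variable {K M}

theorem projDefect_apply (x : E) :
    projDefect K M x =
      M.starProjection x - (Fintype.card ι : 𝕜)⁻¹ • ∑ i, (K i).starProjection x := by
  simp [projDefect]

theorem re_inner_projDefect_apply_self (x : E) :
    re ⟪projDefect K M x, x⟫ =
      ‖M.starProjection x‖ ^ 2 - (Fintype.card ι : ℝ)⁻¹ * ∑ i, ‖(K i).starProjection x‖ ^ 2 := by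
  have h (U : Submodule 𝕜 E) [U.HasOrthogonalProjection] :
      re ⟪U.starProjection x, x⟫ = ‖U.starProjection x‖ ^ 2 := by
    rw [re_inner_starProjection_eq_normSq, starProjection_apply, norm_coe]
  have hc : (starRingEnd 𝕜) (Fintype.card ι : 𝕜)⁻¹ = (((Fintype.card ι : ℝ)⁻¹ : ℝ) : 𝕜) := by
    simp
  simp only [projDefect_apply, inner_sub_left, inner_smul_left, sum_inner, map_sub, hc,
    re_ofReal_mul, map_sum, h]

theorem re_inner_projDefect_apply_self_of_mem [Nonempty ι] {x : E} (hx : x ∈ M) :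
    re ⟪projDefect K M x, x⟫ = (Fintype.card ι : ℝ)⁻¹ * ∑ i, ‖x - (K i).starProjection x‖ ^ 2 := by
  simp only [re_inner_projDefect_apply_self, starProjection_eq_self_iff.mpr hx,
    norm_sub_starProjection_sq, sum_sub_distrib, sum_const, card_univ, nsmul_eq_mul]
  field_simp

theorem norm_sum_sq_le_sum_mul_norm_sub_starProjection (x : ι → E) (hx : ∀ i, x i ∈ (K i)ᗮ) :
    ‖∑ i, x i‖ ^ 2 ≤ ∑ i, ‖x i‖ * ‖∑ j, x j - (K i).starProjection (∑ j, x j)‖ := by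
  set y := ∑ j, x j
  have horth (i : ι) : ⟪x i, y⟫ = ⟪x i, y - (K i).starProjection y⟫ := by
    rw [inner_sub_right, inner_left_of_mem_orthogonal ((K i).starProjection_apply_mem y) (hx i),
      sub_zero]
  calc ‖y‖ ^ 2 = ∑ i, re ⟪x i, y - (K i).starProjection y⟫ := by
        simp only [← horth, ← map_sum, ← sum_inner, y, inner_self_eq_norm_sq]
    _ ≤ ∑ i, ‖x i‖ * ‖y - (K i).starProjection y‖ :=
        sum_le_sum fun i _ => (re_le_norm _).trans (norm_inner_le_norm _ _)

theorem sum_sub_starProjection_eq_card_smul_projDefect [Nonempty ι] {x : E} (hx : x ∈ M) :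
    ∑ i, (x - (K i).starProjection x) = (Fintype.card ι : 𝕜) • projDefect K M x := by
  rw [projDefect_apply, starProjection_eq_self_iff.mpr hx, smul_sub, smul_inv_smul₀ (by simp),
    sum_sub_distrib, sum_const, card_univ, Nat.cast_smul_eq_nsmul]

theorem norm_sum_sq_le [Nonempty ι] (x : ι → E) (hxK : ∀ i, x i ∈ (K i)ᗮ) (hxM : ∀ i, x i ∈ M) :
    ‖∑ i, x i‖ ^ 2 ≤ Fintype.card ι * ‖projDefect K M‖ * ∑ i, ‖x i‖ ^ 2 := by
  set y := ∑ j, x j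
  have hyM : y ∈ M := M.sum_mem fun i _ => hxM i
  have hdefect : ∑ i, ‖y - (K i).starProjection y‖ ^ 2 ≤
      Fintype.card ι * ‖projDefect K M‖ * ‖y‖ ^ 2 := by
    have hre : re ⟪projDefect K M y, y⟫ ≤ ‖projDefect K M‖ * ‖y‖ ^ 2 :=
      calc re ⟪projDefect K M y, y⟫ ≤ ‖projDefect K M y‖ * ‖y‖ :=
            (re_le_norm _).trans (norm_inner_le_norm _ _)
        _ ≤ ‖projDefect K M‖ * ‖y‖ * ‖y‖ := by gcongr; exact (projDefect K M).le_opNorm y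
        _ = ‖projDefect K M‖ * ‖y‖ ^ 2 := by ring
    rw [re_inner_projDefect_apply_self_of_mem hyM] at hre
    rw [mul_assoc]
    exact (inv_mul_le_iff₀ (by positivity)).mp hre
  have hCS : (‖y‖ ^ 2) ^ 2 ≤ (∑ i, ‖x i‖ ^ 2) * ∑ i, ‖y - (K i).starProjection y‖ ^ 2 :=
    (pow_le_pow_left₀ (sq_nonneg _) (norm_sum_sq_le_sum_mul_norm_sub_starProjection x hxK) 2).trans
      (sum_mul_sq_le_sq_mul_sq _ _ _)
  rcases eq_or_ne y 0 with hy | hy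
  · rw [hy, norm_zero, zero_pow two_ne_zero]
    positivity
  · refine le_of_mul_le_mul_right ?_ (by positivity : 0 < ‖y‖ ^ 2)
    calc ‖y‖ ^ 2 * ‖y‖ ^ 2 ≤ (∑ i, ‖x i‖ ^ 2) * ∑ i, ‖y - (K i).starProjection y‖ ^ 2 := by
          rw [← sq]; exact hCS
      _ ≤ (∑ i, ‖x i‖ ^ 2) * (Fintype.card ι * ‖projDefect K M‖ * ‖y‖ ^ 2) := by gcongr
      _ = Fintype.card ι * ‖projDefect K M‖ * (∑ i, ‖x i‖ ^ 2) * ‖y‖ ^ 2 := by ring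

theorem card_mul_rayleighQuotient_mul_le [Nonempty ι] {x : E} (hx : x ∈ M) :
    Fintype.card ι * (projDefect K M).rayleighQuotient x * ∑ i, ‖x - (K i).starProjection x‖ ^ 2 ≤
      ‖∑ i, (x - (K i).starProjection x)‖ ^ 2 := by
  have hsum : ∑ i, ‖x - (K i).starProjection x‖ ^ 2 =
      Fintype.card ι * (projDefect K M).reApplyInnerSelf x := by
    rw [ContinuousLinearMap.reApplyInnerSelf_apply, re_inner_projDefect_apply_self_of_mem hx,
      mul_inv_cancel_left₀ (by simp)]
  rw [hsum, sum_sub_starProjection_eq_card_smul_projDefect hx, norm_smul, mul_pow,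
    RCLike.norm_natCast]
  calc (Fintype.card ι : ℝ) * (projDefect K M).rayleighQuotient x *
        (Fintype.card ι * (projDefect K M).reApplyInnerSelf x)
      = (Fintype.card ι : ℝ) ^ 2 *
          ((projDefect K M).rayleighQuotient x * (projDefect K M).reApplyInnerSelf x) := by ring
    _ ≤ (Fintype.card ι : ℝ) ^ 2 * ‖projDefect K M x‖ ^ 2 := by
        gcongr; exact (projDefect K M).rayleighQuotient_mul_reApplyInnerSelf_le x

theorem projDefect_apply_mem (hK : ∀ i, K i ≤ M) (x : E) : projDefect K M x ∈ M := by
  rw [projDefect_apply]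
  exact M.sub_mem (M.starProjection_apply_mem x)
    (M.smul_mem _ (M.sum_mem fun i _ => hK i ((K i).starProjection_apply_mem x)))

theorem projDefect_apply_starProjection (hK : ∀ i, K i ≤ M) (x : E) :
    projDefect K M (M.starProjection x) = projDefect K M x := by
  have hP (i : ι) : (K i).starProjection (M.starProjection x) = (K i).starProjection x :=
    congr($(starProjection_comp_starProjection_of_le (hK i)) x)
  simp only [projDefect_apply, hP, starProjection_eq_self_iff.mpr (M.starProjection_apply_mem x)]

theorem inner_projDefect_starProjection (hK : ∀ i, K i ≤ M) (x : E) :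
    ⟪projDefect K M (M.starProjection x), M.starProjection x⟫ = ⟪projDefect K M x, x⟫ := by
  rw [projDefect_apply_starProjection hK, ← inner_starProjection_left_eq_right,
    starProjection_eq_self_iff.mpr (projDefect_apply_mem hK x)]

theorem projDefect_isPositive (hK : ∀ i, K i ≤ M) : (projDefect K M).IsPositive := by
  refine ⟨?_, fun x => ?_⟩
  · have hc : (starRingEnd 𝕜) (Fintype.card ι : 𝕜)⁻¹ = (Fintype.card ι : 𝕜)⁻¹ := by simp
    rw [projDefect, ContinuousLinearMap.toLinearMap_sub, ContinuousLinearMap.toLinearMap_smul,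
      ContinuousLinearMap.toLinearMap_sum]
    exact M.starProjection_isSymmetric.sub
      ((LinearMap.isSymmetric_sum _ fun i _ => (K i).starProjection_isSymmetric).smul hc)
  · have hle (i : ι) : ‖(K i).starProjection x‖ ^ 2 ≤ ‖M.starProjection x‖ ^ 2 := by
      rw [← congr($(starProjection_comp_starProjection_of_le (hK i)) x)]
      gcongr
      exact norm_starProjection_apply_le _ _
    have hsum : (Fintype.card ι : ℝ)⁻¹ * ∑ i, ‖(K i).starProjection x‖ ^ 2 ≤
        ‖M.starProjection x‖ ^ 2 := by
      calc (Fintype.card ι : ℝ)⁻¹ * ∑ i, ‖(K i).starProjection x‖ ^ 2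
          ≤ (Fintype.card ι : ℝ)⁻¹ * (Fintype.card ι * ‖M.starProjection x‖ ^ 2) := by
            gcongr
            simpa using sum_le_sum fun i (_ : i ∈ univ) => hle i
        _ ≤ ‖M.starProjection x‖ ^ 2 := by
            rw [← mul_assoc]
            exact mul_le_of_le_one_left (sq_nonneg _) (inv_mul_le_one_of_le₀ le_rfl (by simp))
    rw [ContinuousLinearMap.reApplyInnerSelf_apply, re_inner_projDefect_apply_self]
    linarith

theorem eq_of_projDefect_eq_zero (hK : ∀ i, K i ≤ M) (h : projDefect K M = 0) (i : ι) :
    K i = M := by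
  have : Nonempty ι := ⟨i⟩
  refine le_antisymm (hK i) fun x hx => ?_
  have hsum : ∑ j, ‖x - (K j).starProjection x‖ ^ 2 = 0 := by
    simpa [h] using (re_inner_projDefect_apply_self_of_mem (K := K) hx).symm
  have hi := (sum_eq_zero_iff_of_nonneg fun j _ => sq_nonneg _).mp hsum i (mem_univ i)
  rw [sq_eq_zero_iff, norm_eq_zero, sub_eq_zero] at hi
  exact starProjection_eq_self_iff.mp hi.symm

theorem rayleighQuotient_le_rayleighQuotient_starProjection (hK : ∀ i, K i ≤ M) (x : E) :
    (projDefect K M).rayleighQuotient x ≤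
      (projDefect K M).rayleighQuotient (M.starProjection x) := by
  simp only [ContinuousLinearMap.rayleighQuotient, ContinuousLinearMap.reApplyInnerSelf_apply,
    inner_projDefect_starProjection hK]
  rcases eq_or_ne (M.starProjection x) 0 with h | h
  · have : projDefect K M x = 0 := by rw [← projDefect_apply_starProjection hK, h, map_zero]
    simp [this]
  · exact div_le_div_of_nonneg_left (projDefect_isPositive hK |>.2 x) (by positivity)
      (by gcongr; exact norm_starProjection_apply_le _ _)

theorem exists_card_mul_lt_norm_sum_sq_div [Nonempty ι] (hK : ∀ i, K i ≤ M) {t : ℝ} (ht₀ : 0 ≤ t)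
    (ht : t < ‖projDefect K M‖) :
    ∃ z : ι → E, (∀ i, z i ∈ (K i)ᗮ ⊓ M) ∧ z ≠ 0 ∧
      Fintype.card ι * t < ‖∑ i, z i‖ ^ 2 / ∑ i, ‖z i‖ ^ 2 := by
  obtain ⟨x, hx⟩ := (projDefect_isPositive hK).exists_lt_rayleighQuotient ht
  set y := M.starProjection x
  have hyM : y ∈ M := M.starProjection_apply_mem x
  have hy : t < (projDefect K M).rayleighQuotient y :=
    hx.trans_le (rayleighQuotient_le_rayleighQuotient_starProjection hK x)
  set z : ι → E := fun i => y - (K i).starProjection y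
  have hz : z ≠ 0 := by
    intro h
    have hSy : projDefect K M y = 0 := by
      have := sum_sub_starProjection_eq_card_smul_projDefect (K := K) hyM
      simpa [z, h, eq_comm (a := (0 : E))] using this
    rw [ContinuousLinearMap.rayleighQuotient, ContinuousLinearMap.reApplyInnerSelf_apply, hSy,
      inner_zero_left, map_zero, zero_div] at hy
    exact hy.not_ge ht₀
  refine ⟨z, fun i => ⟨sub_starProjection_mem_orthogonal y, M.sub_mem hyM
    (hK i ((K i).starProjection_apply_mem y))⟩, hz, ?_⟩
  rw [lt_div_iff₀ (sum_norm_sq_pos hz)]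
  calc Fintype.card ι * t * ∑ i, ‖z i‖ ^ 2
      < Fintype.card ι * (projDefect K M).rayleighQuotient y * ∑ i, ‖z i‖ ^ 2 := by
        gcongr
        exact sum_norm_sq_pos hz
    _ ≤ ‖∑ i, z i‖ ^ 2 := card_mul_rayleighQuotient_mul_le hyM

end Submodule

end

section Cosine

variable {H : Type*} [NormedAddCommGroup H] [InnerProductSpace ℂ H]

open Finset Submodule

theorem cosine_quotient_eq {n : ℕ} {x : Fin n → H} (hx : x ≠ 0) :
    (1 / ((n : ℝ) - 1)) * (∑ i, ∑ j ∈ univ.erase i, (inner ℂ (x i) (x j)).re) /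
        ∑ i, ‖x i‖ ^ 2 =
      (‖∑ i, x i‖ ^ 2 / ∑ i, ‖x i‖ ^ 2 - 1) / ((n : ℝ) - 1) := by
  have hpair := sum_sum_erase_re_inner (𝕜 := ℂ) x
  simp only [RCLike.re_to_complex] at hpair
  rw [hpair]
  field_simp [(sum_norm_sq_pos hx).ne']

theorem cosine_eq_norm_projDefect {n : ℕ} (hn : 2 ≤ n) (N : Fin n → Submodule ℂ H)
    [∀ i, (N i).HasOrthogonalProjection] [(∑ j, N j).topologicalClosure.HasOrthogonalProjection]
    (hne : ¬ ∀ i, N i = (∑ j, N j).topologicalClosure) :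
    cosine N = (n * ‖projDefect N (∑ j, N j).topologicalClosure‖ - 1) / (n - 1) := by
  set M := (∑ j, N j).topologicalClosure
  set S := projDefect N M
  have hK (i : Fin n) : N i ≤ M :=
    (single_le_sum (fun j _ => zero_le) (mem_univ i)).trans (le_topologicalClosure _)
  have : Nonempty (Fin n) := ⟨⟨0, by omega⟩⟩
  have hn1 : (0 : ℝ) < n - 1 := by
    rw [sub_pos]; exact_mod_cast hn
  have hS : 0 < ‖S‖ := norm_pos_iff.mpr fun h => hne (eq_of_projDefect_eq_zero hK h)
  have hcard : (Fintype.card (Fin n) : ℝ) = n := by simp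
  rw [cosine]
  refine csSup_eq_of_forall_le_of_forall_lt_exists_gt ?_ ?_ fun w hw => ?_
  · obtain ⟨x, hx, hx0, -⟩ := exists_card_mul_lt_norm_sum_sq_div hK le_rfl hS
    exact ⟨_, x, hx, hx0, rfl⟩
  · rintro _ ⟨x, hx, hx0, rfl⟩
    rw [cosine_quotient_eq hx0]
    gcongr
    refine div_le_of_le_mul₀ (sum_nonneg fun i _ => sq_nonneg _) (by positivity) ?_
    simpa [hcard] using norm_sum_sq_le x (fun i => (hx i).1) (fun i => (hx i).2)
  · have ht : (w * (n - 1) + 1) / n < ‖S‖ := by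
      rw [lt_div_iff₀ hn1] at hw
      rw [div_lt_iff₀ (by positivity)]
      linarith
    obtain ⟨x, hx, hx0, hlt⟩ :=
      exists_card_mul_lt_norm_sum_sq_div hK (le_max_right _ 0) (max_lt ht hS)
    refine ⟨_, ⟨x, hx, hx0, rfl⟩, ?_⟩
    rw [cosine_quotient_eq hx0, lt_div_iff₀ hn1]
    have hmax : w * (n - 1) + 1 ≤ n * max ((w * (n - 1) + 1) / n) 0 := by
      rw [← div_le_iff₀' (by positivity)]
      exact le_max_left _ _
    rw [hcard] at hlt
    linarith

end Cosine

theorem stmt_5_general {H : Type*} [NormedAddCommGroup H] [InnerProductSpace ℂ H] [CompleteSpace H]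
    {n : ℕ} (hn : 2 ≤ n) (N : Fin n → Submodule ℂ H)
    (hne : ¬ ∀ i, N i = (∑ j, N j).topologicalClosure)
    (P : Fin n → H →L[ℂ] H)
    (hP : ∀ i, IsSelfAdjoint (P i) ∧ IsIdempotentElem (P i) ∧ LinearMap.range (P i : H →ₗ[ℂ] H) = N i)
    (Q : H →L[ℂ] H)
    (hQ : IsSelfAdjoint Q ∧ IsIdempotentElem Q ∧
      LinearMap.range (Q : H →ₗ[ℂ] H) = (∑ j, N j).topologicalClosure) :
    cosine N = ((n : ℝ) / ((n : ℝ) - 1)) * ‖(1 / (n : ℂ)) • (∑ i, P i) - Q‖ -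
      1 / ((n : ℝ) - 1) := by
  choose _ hPN using fun i =>
    IsStarProjection.exists_eq_starProjection ⟨(hP i).2.1, (hP i).1⟩ (hP i).2.2
  obtain ⟨_, rfl⟩ := IsStarProjection.exists_eq_starProjection ⟨hQ.2.1, hQ.1⟩ hQ.2.2
  obtain rfl : P = fun i => (N i).starProjection := funext hPN
  rw [cosine_eq_norm_projDefect hn N hne, norm_sub_rev, Submodule.projDefect, Fintype.card_fin,
    one_div]
  ring

/-- (Badea–Grivaux–Müller formula.) For `n ≥ 2` closed subspaces
`N₁, …, Nₙ`, not all equal to the closure `N` of their algebraic sum, with orthogonal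
projections `P i` onto `N i` and `Q` onto `N`:
`c(N₁,…,Nₙ) = (n/(n−1)) ‖(1/n)(P₁ + ⋯ + Pₙ) − Q‖ − 1/(n−1)`. -/
theorem stmt_5 {H : Type*} [NormedAddCommGroup H] [InnerProductSpace ℂ H] [CompleteSpace H]
    {n : ℕ} (hn : 2 ≤ n) (N : Fin n → Submodule ℂ H)
    (hNc : ∀ i, IsClosed ((N i : Set H)))
    (hne : ¬ ∀ i, N i = (∑ j, N j).topologicalClosure)
    (P : Fin n → H →L[ℂ] H)
    (hP : ∀ i, IsSelfAdjoint (P i) ∧ IsIdempotentElem (P i) ∧ LinearMap.range (P i : H →ₗ[ℂ] H) = N i)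
    (Q : H →L[ℂ] H)
    (hQ : IsSelfAdjoint Q ∧ IsIdempotentElem Q ∧
      LinearMap.range (Q : H →ₗ[ℂ] H) = (∑ j, N j).topologicalClosure) :
    cosine N = ((n : ℝ) / ((n : ℝ) - 1)) * ‖(1 / (n : ℂ)) • (∑ i, P i) - Q‖ -
      1 / ((n : ℝ) - 1) :=
  stmt_5_general hn N hne P hP Q hQ
end

section
/- Let N_1, …, N_n be closed subspaces of a complex Hilbert space H with orthogonal projections P_{N_1}, …, P_{N_n}. Then the family {N_1, …, N_n} is perpendicular, i.e. N_i ∩ (N_i ∩ N_j)^⊥ is orthogonal to N_j ∩ (N_i ∩ N_j)^⊥ for all 1 ≤ i < j ≤ n, if and only if the projections P_{N_1}, …, P_{N_n} pairwise commute. -/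
/-!
If `U ⊓ (U ⊓ V)ᗮ ⟂ V ⊓ (U ⊓ V)ᗮ`, then all of `U = (U ⊓ V) ⊔ (U ⊓ (U ⊓ V)ᗮ)` is orthogonal
to `V ⊓ (U ⊓ V)ᗮ`. Since `P_V y - P_{U ⊓ V} y` lies in `V ⊓ (U ⊓ V)ᗮ`, this gives
`P_U P_V = P_{U ⊓ V}`, which is symmetric in `U` and `V`, so the projections commute.
Conversely, if `P_U` and `P_V` commute then `P_U P_V y ∈ U ⊓ V`, so for `x ∈ U ⊓ (U ⊓ V)ᗮ`
and `y ∈ V` we get `⟪x, y⟫ = ⟪P_U x, P_V y⟫ = ⟪x, P_U P_V y⟫ = 0`.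
-/

namespace Submodule

variable {𝕜 E : Type*} [RCLike 𝕜] [NormedAddCommGroup E] [InnerProductSpace 𝕜 E]
  {U V : Submodule 𝕜 E}

def Perpendicular (U V : Submodule 𝕜 E) : Prop :=
  U ⊓ (U ⊓ V)ᗮ ⟂ V ⊓ (U ⊓ V)ᗮ

theorem perpendicular_iff_inner_eq_zero : U.Perpendicular V ↔
    ∀ x ∈ U ⊓ (U ⊓ V)ᗮ, ∀ y ∈ V ⊓ (U ⊓ V)ᗮ, (inner 𝕜 x y : 𝕜) = 0 :=
  isOrtho_iff_inner_eq

theorem Perpendicular.symm (h : U.Perpendicular V) : V.Perpendicular U := by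
  rw [Perpendicular, inf_comm V U]
  exact IsOrtho.symm h

theorem Perpendicular.isOrtho_inf_orthogonal (h : U.Perpendicular V)
    [(U ⊓ V).HasOrthogonalProjection] : U ⟂ V ⊓ (U ⊓ V)ᗮ := by
  have hU : U ≤ U ⊓ V ⊔ (U ⊓ V)ᗮ ⊓ U :=
    (sup_orthogonal_inf_of_hasOrthogonalProjection inf_le_left).ge
  refine IsOrtho.mono_left hU (isOrtho_sup_left.mpr ⟨?_, ?_⟩)
  · exact (isOrtho_orthogonal_right _).mono_right inf_le_right
  · rw [inf_comm]
    exact h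

theorem Perpendicular.starProjection_comp_starProjection (h : U.Perpendicular V)
    [U.HasOrthogonalProjection] [V.HasOrthogonalProjection] [(U ⊓ V).HasOrthogonalProjection] :
    U.starProjection ∘L V.starProjection = (U ⊓ V).starProjection := by
  ext y
  set W := U ⊓ V
  have hrest : V.starProjection y - W.starProjection y ∈ V ⊓ Wᗮ := by
    refine ⟨V.sub_mem (V.starProjection_apply_mem y) (W.starProjection_apply_mem y).2, ?_⟩
    have hyV : y - V.starProjection y ∈ Wᗮ :=
      orthogonal_le inf_le_right (V.sub_starProjection_mem_orthogonal y)
    simpa using Wᗮ.sub_mem (W.sub_starProjection_mem_orthogonal y) hyV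
  have hvanish : U.starProjection (V.starProjection y - W.starProjection y) = 0 :=
    (starProjection_apply_eq_zero_iff U).mpr (h.isOrtho_inf_orthogonal.ge hrest)
  have hW : U.starProjection (W.starProjection y) = W.starProjection y :=
    starProjection_eq_self_iff.mpr (W.starProjection_apply_mem y).1
  rw [map_sub, hW, sub_eq_zero] at hvanish
  exact hvanish

theorem Perpendicular.commute_starProjection (h : U.Perpendicular V)
    [U.HasOrthogonalProjection] [V.HasOrthogonalProjection] [(U ⊓ V).HasOrthogonalProjection] :
    Commute U.starProjection V.starProjection := by
  have : (V ⊓ U).HasOrthogonalProjection := inf_comm U V ▸ inferInstance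
  change U.starProjection ∘L V.starProjection = V.starProjection ∘L U.starProjection
  rw [h.starProjection_comp_starProjection, h.symm.starProjection_comp_starProjection]
  congr 1
  exact inf_comm U V

theorem perpendicular_of_commute_starProjection [U.HasOrthogonalProjection]
    [V.HasOrthogonalProjection] (h : Commute U.starProjection V.starProjection) :
    U.Perpendicular V := by
  rw [perpendicular_iff_inner_eq_zero]
  rintro x ⟨hxU, hxW⟩ y ⟨hyV, -⟩
  have hUV : U.starProjection (V.starProjection y) ∈ U ⊓ V := by
    refine ⟨U.starProjection_apply_mem _, ?_⟩
    rw [← mul_apply_eq_comp, h.eq]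
    exact V.starProjection_apply_mem _
  calc (inner 𝕜 x y : 𝕜) = inner 𝕜 (U.starProjection x) (V.starProjection y) := by
        rw [starProjection_eq_self_iff.mpr hxU, starProjection_eq_self_iff.mpr hyV]
    _ = inner 𝕜 x (U.starProjection (V.starProjection y)) :=
        inner_starProjection_left_eq_right U x _
    _ = 0 := inner_left_of_mem_orthogonal hUV hxW

end Submodule

open Submodule in
/-- A family `N₁, …, Nₙ` of closed subspaces of a complex Hilbert space is
perpendicular (i.e. `Nᵢ ⊓ (Nᵢ ⊓ Nⱼ)ᗮ ⟂ Nⱼ ⊓ (Nᵢ ⊓ Nⱼ)ᗮ` for all `i < j`) if and only if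
the orthogonal projections `P₁, …, Pₙ` pairwise commute. -/
theorem stmt_10 {H : Type*} [NormedAddCommGroup H] [InnerProductSpace ℂ H] [CompleteSpace H]
    {n : ℕ} (N : Fin n → Submodule ℂ H) (hNc : ∀ i, IsClosed ((N i : Set H)))
    (P : Fin n → H →L[ℂ] H)
    (hP : ∀ i, IsSelfAdjoint (P i) ∧ IsIdempotentElem (P i) ∧ LinearMap.range (P i : H →ₗ[ℂ] H) = N i) :
    (∀ i j : Fin n, i < j →
        ∀ x ∈ N i ⊓ (N i ⊓ N j)ᗮ, ∀ y ∈ N j ⊓ (N i ⊓ N j)ᗮ, (inner ℂ x y : ℂ) = 0) ↔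
      (∀ i j : Fin n, P i * P j = P j * P i) := by
  have (i : Fin n) : CompleteSpace (N i) := (hNc i).completeSpace_coe
  have (i j : Fin n) : CompleteSpace (N i ⊓ N j : Submodule ℂ H) :=
    ((hNc i).inter (hNc j)).completeSpace_coe
  obtain rfl : P = fun i ↦ (N i).starProjection := funext fun i ↦
    ContinuousLinearMap.IsStarProjection.ext ⟨(hP i).2.1, (hP i).1⟩
      isStarProjection_starProjection (by rw [range_starProjection]; exact (hP i).2.2)
  simp_rw [← perpendicular_iff_inner_eq_zero]
  constructor
  · intro h i j
    rcases lt_trichotomy i j with hij | rfl | hij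
    · exact (h i j hij).commute_starProjection
    · rfl
    · exact (h j i hij).commute_starProjection.symm
  · exact fun h i j _ ↦ perpendicular_of_commute_starProjection (h i j)
end

section
/- Let P_1, …, P_n be pairwise commuting orthogonal projections on a complex Hilbert space H, and let c_1, …, c_n be nonnegative real numbers. Then the positive operator c_1 P_1 + ⋯ + c_n P_n has closed range. -/
/-!
Commuting idempotents generate a commutative algebra, and there every combination
`c₀ + ∑ cᵢ Pᵢ` is von Neumann regular, i.e. `T = T S T` for some `S`: splitting along one
idempotent `p` writes `c₀ + S + c • p` as `p * ((c₀ + c) + S) + (1 - p) * (c₀ + S)`, two shorter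
combinations, whose generalized inverses `s`, `t` glue to `p * s + (1 - p) * t`. If `T S T = T`,
then `T S` is an idempotent with the same range as `T`, and the range of a bounded idempotent is
closed, being the kernel of `1 - T S`.
-/

def IsVonNeumannRegularElem {R : Type*} [Mul R] (a : R) : Prop :=
  ∃ b, a * b * a = a

namespace IsVonNeumannRegularElem

theorem of_groupWithZero {G₀ : Type*} [GroupWithZero G₀] (a : G₀) : IsVonNeumannRegularElem a :=
  ⟨a⁻¹, mul_inv_mul_cancel a⟩

theorem map {R S F : Type*} [Mul R] [Mul S] [FunLike F R S] [MulHomClass F R S] (f : F)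
    {a : R} (ha : IsVonNeumannRegularElem a) : IsVonNeumannRegularElem (f a) := by
  obtain ⟨b, hb⟩ := ha
  exact ⟨f b, by rw [← map_mul, ← map_mul, hb]⟩

theorem idempotent_mul_add {R : Type*} [CommRing R] {p u v : R} (hp : IsIdempotentElem p)
    (hu : IsVonNeumannRegularElem u) (hv : IsVonNeumannRegularElem v) :
    IsVonNeumannRegularElem (p * u + (1 - p) * v) := by
  obtain ⟨s, hs⟩ := hu
  obtain ⟨t, ht⟩ := hv
  have hpq : p * (1 - p) = 0 := by rw [mul_sub, mul_one, hp.eq, sub_self]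
  have mul_glue : ∀ a b c d : R,
      (p * a + (1 - p) * b) * (p * c + (1 - p) * d) = p * (a * c) + (1 - p) * (b * d) := by
    intro a b c d
    linear_combination (a * c) * hp.eq + (b * d) * hp.one_sub.eq + (a * d + b * c) * hpq
  exact ⟨p * s + (1 - p) * t, by rw [mul_glue, mul_glue, hs, ht]⟩

end IsVonNeumannRegularElem

section CommRing

variable {𝕜 R ι : Type*} [Field 𝕜] [CommRing R] [Algebra 𝕜 R]

theorem isVonNeumannRegularElem_algebraMap_add_sum_smul (P : ι → R)
    (hP : ∀ i, IsIdempotentElem (P i)) (c : ι → 𝕜) (s : Finset ι) (c₀ : 𝕜) :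
    IsVonNeumannRegularElem (algebraMap 𝕜 R c₀ + ∑ i ∈ s, c i • P i) := by
  classical
  induction s using Finset.induction_on generalizing c₀ with
  | empty =>
    simpa using (IsVonNeumannRegularElem.of_groupWithZero c₀).map (algebraMap 𝕜 R)
  | insert i s hi ih =>
    have split : algebraMap 𝕜 R c₀ + ∑ j ∈ insert i s, c j • P j
        = P i * (algebraMap 𝕜 R (c₀ + c i) + ∑ j ∈ s, c j • P j)
          + (1 - P i) * (algebraMap 𝕜 R c₀ + ∑ j ∈ s, c j • P j) := by
      rw [Finset.sum_insert hi, Algebra.smul_def, map_add]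
      ring
    rw [split]
    exact IsVonNeumannRegularElem.idempotent_mul_add (hP i) (ih _) (ih _)

end CommRing

open scoped IsMulCommutative in
theorem isVonNeumannRegularElem_sum_smul_of_commute {𝕜 A ι : Type*} [Field 𝕜] [Ring A]
    [Algebra 𝕜 A] [Fintype ι] (P : ι → A) (hP : ∀ i, IsIdempotentElem (P i))
    (hcomm : ∀ i j, P i * P j = P j * P i) (c : ι → 𝕜) :
    IsVonNeumannRegularElem (∑ i, c i • P i) := by
  let B := Algebra.adjoin 𝕜 (Set.range P)
  have : IsMulCommutative B := Algebra.isMulCommutative_adjoin 𝕜 <| by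
    rintro _ ⟨i, rfl⟩ _ ⟨j, rfl⟩
    exact hcomm i j
  let P' : ι → B := fun i => ⟨P i, Algebra.subset_adjoin ⟨i, rfl⟩⟩
  have hP' : ∀ i, IsIdempotentElem (P' i) := fun i => Subtype.ext (hP i)
  simpa [P'] using (isVonNeumannRegularElem_algebraMap_add_sum_smul P' hP' c Finset.univ 0).map B.val

theorem ContinuousLinearMap.isClosed_range_of_isVonNeumannRegularElem {R M : Type*} [Ring R]
    [TopologicalSpace M] [AddCommGroup M] [Module R M] [IsTopologicalAddGroup M] [T1Space M]
    {T : M →L[R] M} (hT : IsVonNeumannRegularElem T) : IsClosed (Set.range T) := by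
  obtain ⟨S, hS⟩ := hT
  have hTS : IsIdempotentElem (T * S) := by
    rw [IsIdempotentElem, ← mul_assoc, hS]
  have range_eq : Set.range T = Set.range (T * S) := by
    refine (Set.range_comp_subset_range S T).antisymm' ?_
    rintro _ ⟨x, rfl⟩
    exact ⟨T x, congr($hS x)⟩
  rw [range_eq]
  exact ContinuousLinearMap.IsIdempotentElem.isClosed_range hTS

theorem stmt_13_general {H : Type*} [NormedAddCommGroup H] [InnerProductSpace ℂ H] [CompleteSpace H]
    {n : ℕ} (P : Fin n → H →L[ℂ] H)
    (hP : ∀ i, IsSelfAdjoint (P i) ∧ IsIdempotentElem (P i))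
    (hcomm : ∀ i j : Fin n, P i * P j = P j * P i)
    (c : Fin n → ℝ) :
    IsClosed (Set.range ⇑(∑ i, ((c i : ℂ)) • P i)) :=
  ContinuousLinearMap.isClosed_range_of_isVonNeumannRegularElem <|
    isVonNeumannRegularElem_sum_smul_of_commute P (fun i => (hP i).2) hcomm _

/-- A nonnegative linear combination `c₁ P₁ + ⋯ + cₙ Pₙ` of pairwise
commuting orthogonal projections on a complex Hilbert space has closed range. -/
theorem stmt_13 {H : Type*} [NormedAddCommGroup H] [InnerProductSpace ℂ H] [CompleteSpace H]
    {n : ℕ} (P : Fin n → H →L[ℂ] H)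
    (hP : ∀ i, IsSelfAdjoint (P i) ∧ IsIdempotentElem (P i))
    (hcomm : ∀ i j : Fin n, P i * P j = P j * P i)
    (c : Fin n → ℝ) (hc : ∀ i, 0 ≤ c i) :
    IsClosed (Set.range ⇑(∑ i, ((c i : ℂ)) • P i)) :=
  stmt_13_general P hP hcomm c
end

section
/- Let N_1, N_2, N_3 be closed subspaces of a complex Hilbert space H whose orthogonal projections P_{N_1}, P_{N_2}, P_{N_3} pairwise commute. Let N denote the closure of N_1 + N_2 + N_3 and let K denote the closure of N_2 + N_3. Then P_{N_1} + P_{N_2} + P_{N_3} − P_N = P_{N_1 ∩ K} + P_{N_2 ∩ N_3}, and consequently ‖(1/3)(P_{N_1} + P_{N_2} + P_{N_3}) − P_N‖ ≤ 2/3 in the operator norm. -/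
/-!
For commuting orthogonal projections `p` and `q`, the product `p * q` projects onto
`range p ⊓ range q` and `p + q - p * q` onto `range p ⊔ range q`, which is therefore closed.
With `T = P₂ + P₃ - P₂ P₃ = P_K` this gives `P_{N₂ ⊓ N₃} = P₂ P₃`, `P_{N₁ ⊓ K} = P₁ T` and
`P_N = P₁ + T - P₁ T`, so the identity is ring arithmetic. For the bound,
`(1/3)(P₁ + P₂ + P₃) - P_N = -(1/3)((P_N - P_{N₁ ⊓ K}) + (P_N - P_{N₂ ⊓ N₃}))`, and both
differences are projections, of norm at most `1`, because `N₁ ⊓ K` and `N₂ ⊓ N₃` lie in `N`.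
-/

open ContinuousLinearMap

namespace ContinuousLinearMap.IsIdempotentElem

section Semiring

variable {R M : Type*} [Semiring R] [TopologicalSpace M] [AddCommMonoid M] [Module R M]
  {p q : M →L[R] M}

theorem mem_range_iff (hp : IsIdempotentElem p) {x : M} :
    x ∈ LinearMap.range (p : M →ₗ[R] M) ↔ p x = x :=
  LinearMap.IsIdempotentElem.mem_range_iff hp.toLinearMap

theorem mul_eq_right_iff_range_le (hq : IsIdempotentElem q) :
    q * p = p ↔ LinearMap.range (p : M →ₗ[R] M) ≤ LinearMap.range (q : M →ₗ[R] M) := by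
  rw [← LinearMap.IsIdempotentElem.comp_eq_right_iff hq.toLinearMap, ← coe_inj]
  rfl

theorem range_mul_of_commute (hp : IsIdempotentElem p) (hq : IsIdempotentElem q)
    (hpq : Commute p q) :
    LinearMap.range ((p * q : M →L[R] M) : M →ₗ[R] M) =
      LinearMap.range (p : M →ₗ[R] M) ⊓ LinearMap.range (q : M →ₗ[R] M) := by
  refine le_antisymm (le_inf (LinearMap.range_comp_le_range _ _) ?_) ?_
  · rw [hpq.eq]
    exact LinearMap.range_comp_le_range _ _
  · intro x ⟨hxp, hxq⟩
    rw [SetLike.mem_coe, mem_range_iff hp] at hxp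
    rw [SetLike.mem_coe, mem_range_iff hq] at hxq
    exact ⟨x, by rw [coe_coe, mul_apply_eq_comp, hxq, hxp]⟩

end Semiring

variable {R M : Type*} [Ring R] [TopologicalSpace M] [AddCommGroup M] [IsTopologicalAddGroup M]
  [Module R M] {p q : M →L[R] M}

theorem range_add_sub_mul_of_commute (hp : IsIdempotentElem p) (hq : IsIdempotentElem q)
    (hpq : Commute p q) :
    LinearMap.range ((p + q - p * q : M →L[R] M) : M →ₗ[R] M) =
      LinearMap.range (p : M →ₗ[R] M) ⊔ LinearMap.range (q : M →ₗ[R] M) := by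
  have hqp (x : M) : p (q x) = q (p x) := congr($hpq.eq x)
  refine le_antisymm ?_ (sup_le ?_ ?_)
  · rintro _ ⟨y, rfl⟩
    refine Submodule.mem_sup.mpr ⟨p (y - q y), ⟨_, rfl⟩, q y, ⟨y, rfl⟩, ?_⟩
    simp only [map_sub, coe_coe, sub_apply, add_apply, mul_apply_eq_comp]
    abel
  all_goals
    intro x hx
    rw [mem_range_iff (hp.add_sub_mul_of_commute hpq hq)]
    simp only [sub_apply, add_apply, mul_apply_eq_comp]
  · rw [mem_range_iff hp] at hx
    rw [hqp, hx, add_sub_cancel_right]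
  · rw [mem_range_iff hq] at hx
    rw [hx, add_sub_cancel_left]

theorem topologicalClosure_range_sup_range_of_commute [ContinuousConstSMul R M] [T1Space M]
    (hp : IsIdempotentElem p) (hq : IsIdempotentElem q) (hpq : Commute p q) :
    (LinearMap.range (p : M →ₗ[R] M) ⊔ LinearMap.range (q : M →ₗ[R] M)).topologicalClosure =
      LinearMap.range ((p + q - p * q : M →L[R] M) : M →ₗ[R] M) := by
  rw [← range_add_sub_mul_of_commute hp hq hpq]
  exact (isClosed_range (hp.add_sub_mul_of_commute hpq hq)).submodule_topologicalClosure_eq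

end ContinuousLinearMap.IsIdempotentElem

namespace ContinuousLinearMap.IsStarProjection

variable {𝕜 E : Type*} [RCLike 𝕜] [NormedAddCommGroup E] [InnerProductSpace 𝕜 E] [CompleteSpace E]
  {p q r : E →L[𝕜] E}

theorem eq_mul_of_commute (hp : IsStarProjection p) (hq : IsStarProjection q)
    (hr : IsStarProjection r) (hpq : Commute p q)
    (h : LinearMap.range (r : E →ₗ[𝕜] E) =
      LinearMap.range (p : E →ₗ[𝕜] E) ⊓ LinearMap.range (q : E →ₗ[𝕜] E)) :
    r = p * q :=
  ext hr (hp.mul hq hpq) <|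
    h.trans (IsIdempotentElem.range_mul_of_commute hp.isIdempotentElem hq.isIdempotentElem hpq).symm

theorem eq_add_sub_mul_of_commute (hp : IsStarProjection p) (hq : IsStarProjection q)
    (hr : IsStarProjection r) (hpq : Commute p q)
    (h : LinearMap.range (r : E →ₗ[𝕜] E) =
      (LinearMap.range (p : E →ₗ[𝕜] E) ⊔ LinearMap.range (q : E →ₗ[𝕜] E)).topologicalClosure) :
    r = p + q - p * q :=
  ext hr (hp.add_sub_mul_of_commute hpq hq) <| h.trans <|
    IsIdempotentElem.topologicalClosure_range_sup_range_of_commute hp.isIdempotentElem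
      hq.isIdempotentElem hpq

end ContinuousLinearMap.IsStarProjection

theorem IsStarProjection.norm_third_smul_add_add_sub_le {A : Type*} [NonUnitalNormedRing A]
    [StarRing A] [CStarRing A] [NormedSpace ℂ A] {q r s : A} (hq : IsStarProjection q)
    (hr : IsStarProjection r) (hs : IsStarProjection s) (hqr : q * r = r) (hqs : q * s = s) :
    ‖(1 / 3 : ℂ) • (r + s + q) - q‖ ≤ 2 / 3 := by
  have hqr' := (hr.sub_of_mul_eq_right hq hqr).norm_le
  have hqs' := (hs.sub_of_mul_eq_right hq hqs).norm_le
  calc ‖(1 / 3 : ℂ) • (r + s + q) - q‖ = ‖(1 / 3 : ℂ) • ((q - r) + (q - s))‖ := by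
        rw [← norm_neg]; congr 1; module
    _ ≤ 1 / 3 * (‖q - r‖ + ‖q - s‖) := by
        rw [norm_smul]; gcongr
        · norm_num
        · exact norm_add_le _ _
    _ ≤ 2 / 3 := by linarith

theorem stmt_17_general {H : Type*} [NormedAddCommGroup H] [InnerProductSpace ℂ H] [CompleteSpace H]
    (N₁ N₂ N₃ : Submodule ℂ H)
    (P₁ P₂ P₃ : H →L[ℂ] H)
    (hP₁ : IsSelfAdjoint P₁ ∧ IsIdempotentElem P₁ ∧ LinearMap.range (P₁ : H →ₗ[ℂ] H) = N₁)
    (hP₂ : IsSelfAdjoint P₂ ∧ IsIdempotentElem P₂ ∧ LinearMap.range (P₂ : H →ₗ[ℂ] H) = N₂)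
    (hP₃ : IsSelfAdjoint P₃ ∧ IsIdempotentElem P₃ ∧ LinearMap.range (P₃ : H →ₗ[ℂ] H) = N₃)
    (hc₁₂ : P₁ * P₂ = P₂ * P₁) (hc₁₃ : P₁ * P₃ = P₃ * P₁) (hc₂₃ : P₂ * P₃ = P₃ * P₂)
    (Q : H →L[ℂ] H)
    (hQ : IsSelfAdjoint Q ∧ IsIdempotentElem Q ∧
      LinearMap.range (Q : H →ₗ[ℂ] H) = (N₁ + N₂ + N₃).topologicalClosure)
    (R : H →L[ℂ] H)
    (hR : IsSelfAdjoint R ∧ IsIdempotentElem R ∧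
      LinearMap.range (R : H →ₗ[ℂ] H) = N₁ ⊓ (N₂ + N₃).topologicalClosure)
    (S : H →L[ℂ] H)
    (hS : IsSelfAdjoint S ∧ IsIdempotentElem S ∧ LinearMap.range (S : H →ₗ[ℂ] H) = N₂ ⊓ N₃) :
    P₁ + P₂ + P₃ - Q = R + S ∧ ‖(1 / (3 : ℂ)) • (P₁ + P₂ + P₃) - Q‖ ≤ 2 / 3 := by
  obtain ⟨h₁, h₂, h₃, hQ', hR', hS'⟩ : IsStarProjection P₁ ∧ IsStarProjection P₂ ∧
      IsStarProjection P₃ ∧ IsStarProjection Q ∧ IsStarProjection R ∧ IsStarProjection S :=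
    ⟨⟨hP₁.2.1, hP₁.1⟩, ⟨hP₂.2.1, hP₂.1⟩, ⟨hP₃.2.1, hP₃.1⟩, ⟨hQ.2.1, hQ.1⟩, ⟨hR.2.1, hR.1⟩,
      ⟨hS.2.1, hS.1⟩⟩
  obtain ⟨-, -, rfl⟩ := hP₁
  obtain ⟨-, -, rfl⟩ := hP₂
  obtain ⟨-, -, rfl⟩ := hP₃
  set T := P₂ + P₃ - P₂ * P₃ with hT_def
  have hT : IsStarProjection T := h₂.add_sub_mul_of_commute hc₂₃ h₃
  have hTr := IsIdempotentElem.range_add_sub_mul_of_commute h₂.isIdempotentElem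
    h₃.isIdempotentElem hc₂₃
  have hK := IsIdempotentElem.topologicalClosure_range_sup_range_of_commute h₂.isIdempotentElem
    h₃.isIdempotentElem hc₂₃
  have hc₁T : Commute P₁ T := (Commute.add_right hc₁₂ hc₁₃).sub_right (Commute.mul_right hc₁₂ hc₁₃)
  have hST : S = P₂ * P₃ := IsStarProjection.eq_mul_of_commute h₂ h₃ hS' hc₂₃ hS.2.2
  have hRT : R = P₁ * T := IsStarProjection.eq_mul_of_commute h₁ hT hR' hc₁T <| by
    rw [hR.2.2, Submodule.add_eq_sup, hK]
  have hQT : Q = P₁ + T - P₁ * T := IsStarProjection.eq_add_sub_mul_of_commute h₁ hT hQ' hc₁T <| by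
    rw [hQ.2.2, hTr, Submodule.add_eq_sup, Submodule.add_eq_sup, sup_assoc]
  have hsum : P₁ + P₂ + P₃ - Q = R + S := by
    rw [hQT, hRT, hST, hT_def]
    noncomm_ring
  have hQr : LinearMap.range (Q : H →ₗ[ℂ] H) =
      LinearMap.range (P₁ : H →ₗ[ℂ] H) ⊔ LinearMap.range (T : H →ₗ[ℂ] H) := by
    rw [hQT]
    exact IsIdempotentElem.range_add_sub_mul_of_commute h₁.isIdempotentElem hT.isIdempotentElem hc₁T
  refine ⟨hsum, eq_add_of_sub_eq hsum ▸ hQ'.norm_third_smul_add_add_sub_le hR' hS' ?_ ?_⟩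
  · rw [IsIdempotentElem.mul_eq_right_iff_range_le hQ'.isIdempotentElem, hQr, hRT,
      IsIdempotentElem.range_mul_of_commute h₁.isIdempotentElem hT.isIdempotentElem hc₁T]
    exact inf_le_sup
  · rw [IsIdempotentElem.mul_eq_right_iff_range_le hQ'.isIdempotentElem, hQr, hS.2.2, hTr]
    exact le_sup_of_le_right inf_le_sup

/-- Let `N₁, N₂, N₃` be closed subspaces of a complex Hilbert space whose
orthogonal projections `P₁, P₂, P₃` pairwise commute, let `N` be the closure of
`N₁ + N₂ + N₃` and `K` the closure of `N₂ + N₃`. Then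
`P₁ + P₂ + P₃ − P_N = P_{N₁ ⊓ K} + P_{N₂ ⊓ N₃}`, and consequently
`‖(1/3)(P₁ + P₂ + P₃) − P_N‖ ≤ 2/3`. -/
theorem stmt_17 {H : Type*} [NormedAddCommGroup H] [InnerProductSpace ℂ H] [CompleteSpace H]
    (N₁ N₂ N₃ : Submodule ℂ H)
    (hN₁ : IsClosed (N₁ : Set H)) (hN₂ : IsClosed (N₂ : Set H)) (hN₃ : IsClosed (N₃ : Set H))
    (P₁ P₂ P₃ : H →L[ℂ] H)
    (hP₁ : IsSelfAdjoint P₁ ∧ IsIdempotentElem P₁ ∧ LinearMap.range (P₁ : H →ₗ[ℂ] H) = N₁)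
    (hP₂ : IsSelfAdjoint P₂ ∧ IsIdempotentElem P₂ ∧ LinearMap.range (P₂ : H →ₗ[ℂ] H) = N₂)
    (hP₃ : IsSelfAdjoint P₃ ∧ IsIdempotentElem P₃ ∧ LinearMap.range (P₃ : H →ₗ[ℂ] H) = N₃)
    (hc₁₂ : P₁ * P₂ = P₂ * P₁) (hc₁₃ : P₁ * P₃ = P₃ * P₁) (hc₂₃ : P₂ * P₃ = P₃ * P₂)
    (Q : H →L[ℂ] H)
    (hQ : IsSelfAdjoint Q ∧ IsIdempotentElem Q ∧
      LinearMap.range (Q : H →ₗ[ℂ] H) = (N₁ + N₂ + N₃).topologicalClosure)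
    (R : H →L[ℂ] H)
    (hR : IsSelfAdjoint R ∧ IsIdempotentElem R ∧
      LinearMap.range (R : H →ₗ[ℂ] H) = N₁ ⊓ (N₂ + N₃).topologicalClosure)
    (S : H →L[ℂ] H)
    (hS : IsSelfAdjoint S ∧ IsIdempotentElem S ∧ LinearMap.range (S : H →ₗ[ℂ] H) = N₂ ⊓ N₃) :
    P₁ + P₂ + P₃ - Q = R + S ∧ ‖(1 / (3 : ℂ)) • (P₁ + P₂ + P₃) - Q‖ ≤ 2 / 3 :=
  stmt_17_general N₁ N₂ N₃ P₁ P₂ P₃ hP₁ hP₂ hP₃ hc₁₂ hc₁₃ hc₂₃ Q hQ R hR S hS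
end

section
/- Let Q_1, …, Q_n be pairwise commuting orthogonal projections on a complex Hilbert space H, and let R_1, …, R_n be orthogonal projections on H such that R_j Q_i = Q_i R_j for all 1 ≤ i, j ≤ n. Assume that for every subset S ⊆ {1, …, n} the operator Σ_{j ∈ S} R_j has closed range. Then the operator Q_1 R_1 + ⋯ + Q_n R_n has closed range; equivalently, the algebraic sum of the closed subspaces ran(Q_1) ∩ ran(R_1), …, ran(Q_n) ∩ ran(R_n) is closed. -/
/-!
Let `P S = ∏_{i ∈ S} Qᵢ ∏_{i ∉ S} (1 - Qᵢ)` be the atoms of the Boolean algebra generated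
by the `Qᵢ`: idempotents summing to `1` and commuting with every `Rⱼ`, with `P S Qⱼ = P S`
or `0` according as `j ∈ S` or not. For `A = ∑ Qⱼ Rⱼ` and `T S = ∑_{j ∈ S} Rⱼ` this gives
`P S A = P S (T S)`, whence `ran A = {x | P S x ∈ ran (T S) for all S}`, a closed subspace.
It contains every `ran Qⱼ ∩ ran Rⱼ`, because `ran Rⱼ ⊆ ran (T S)` for `j ∈ S`: the `Rᵢ`
are positive, so `ker (T S) ⊆ ker Rⱼ`, and `ran (T S) = (ker (T S))ᗮ` since `T S` is
self-adjoint with closed range.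
-/

open Finset

section BoolAtom

variable {R ι : Type*} [CommRing R] [Fintype ι] [DecidableEq ι] (e : ι → R)

def boolAtom (S : Finset ι) : R := (∏ i ∈ S, e i) * ∏ i ∈ Sᶜ, (1 - e i)

theorem sum_boolAtom : ∑ S, boolAtom e S = 1 := by
  have := prod_add e (fun i => 1 - e i) univ
  simp only [add_sub_cancel, prod_const_one, powerset_univ, ← compl_eq_univ_sdiff] at this
  exact this.symm

variable {e}

theorem boolAtom_mul_of_mem {j : ι} (he : IsIdempotentElem (e j)) {S : Finset ι} (hj : j ∈ S) :
    boolAtom e S * e j = boolAtom e S := by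
  have : (∏ i ∈ S, e i) * e j = ∏ i ∈ S, e i := by
    rw [← mul_prod_erase S e hj, mul_right_comm, he.eq]
  rw [boolAtom, mul_right_comm, this]

theorem boolAtom_mul_of_notMem {j : ι} (he : IsIdempotentElem (e j)) {S : Finset ι}
    (hj : j ∉ S) :
    boolAtom e S * e j = 0 := by
  rw [boolAtom, mul_assoc, ← mul_prod_erase Sᶜ _ (mem_compl.2 hj), mul_right_comm,
    he.one_sub_mul_self, zero_mul, mul_zero]

theorem isIdempotentElem_boolAtom (he : ∀ i, IsIdempotentElem (e i)) (S : Finset ι) :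
    IsIdempotentElem (boolAtom e S) :=
  (prod_induction _ _ (fun _ _ => .mul) .one fun i _ => he i).mul
    (prod_induction _ _ (fun _ _ => .mul) .one fun i _ => (he i).one_sub)

end BoolAtom

/-- `P S` behaves like `∏_{i ∈ S} e i * ∏_{i ∉ S} (1 - e i)` for a commuting family of
idempotents `e`. -/
structure IsAtomResolution {A ι : Type*} [Semiring A] [Fintype ι] (e : ι → A)
    (P : Finset ι → A) : Prop where
  sum_eq_one : ∑ S, P S = 1
  isIdempotentElem : ∀ S, IsIdempotentElem (P S)
  mul_eq_of_mem : ∀ {S j}, j ∈ S → P S * e j = P S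
  mul_eq_zero_of_notMem : ∀ {S j}, j ∉ S → P S * e j = 0
  commute : ∀ S {x}, (∀ i, Commute x (e i)) → Commute x (P S)

open scoped IsMulCommutative in
/-- The atoms are computed in the commutative subring generated by the `e i`. -/
theorem exists_isAtomResolution {A ι : Type*} [Ring A] [Fintype ι] [DecidableEq ι] {e : ι → A}
    (hcomm : ∀ i j, Commute (e i) (e j)) (he : ∀ i, IsIdempotentElem (e i)) :
    ∃ P, IsAtomResolution e P := by
  let C := Algebra.adjoin ℤ (Set.range e)
  have : IsMulCommutative C :=
    Algebra.isMulCommutative_adjoin ℤ (by rintro _ ⟨i, rfl⟩ _ ⟨j, rfl⟩; exact hcomm i j)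
  let f : ι → C := fun i => ⟨e i, Algebra.subset_adjoin ⟨i, rfl⟩⟩
  have hf : ∀ i, IsIdempotentElem (f i) := fun i => Subtype.ext (he i)
  refine ⟨fun S => ((boolAtom f S : C) : A),
    ⟨?_, fun S => (isIdempotentElem_boolAtom hf S).map C.val, ?_, ?_, ?_⟩⟩
  · exact_mod_cast congrArg ((↑) : C → A) (sum_boolAtom f)
  · exact fun hj => congrArg Subtype.val (boolAtom_mul_of_mem (hf _) hj)
  · exact fun hj => congrArg Subtype.val (boolAtom_mul_of_notMem (hf _) hj)
  · intro S x hx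
    refine (Subalgebra.mem_centralizer_iff ℤ).1
      (Algebra.adjoin_le_centralizer_centralizer ℤ _ (boolAtom f S).2) x ?_
    rintro _ ⟨i, rfl⟩
    exact (hx i).symm

section Range

variable {R M ι : Type*} [Semiring R] [AddCommMonoid M] [Module R M] [TopologicalSpace M]
  [ContinuousAdd M] [Fintype ι] {e r : ι → M →L[R] M}

theorem range_sum_mul_le_sum_range_inf_range (her : ∀ j, Commute (r j) (e j)) :
    (∑ j, e j * r j).range ≤ ∑ j, ((e j).range ⊓ (r j).range) := by
  rintro _ ⟨y, rfl⟩
  rw [ContinuousLinearMap.coe_coe, _root_.sum_apply]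
  refine Submodule.sum_mem _ fun j _ => ?_
  refine single_le_sum (f := fun j => (e j).range ⊓ (r j).range) (fun _ _ => zero_le)
    (mem_univ j) ?_
  exact ⟨⟨r j y, rfl⟩, ⟨e j y, congrArg (· y) (her j).eq⟩⟩

namespace IsAtomResolution

variable {P : Finset ι → M →L[R] M}

theorem mul_sum_mul (hP : IsAtomResolution e P) (S : Finset ι) :
    P S * ∑ j, e j * r j = P S * ∑ j ∈ S, r j := by
  classical
  have h : ∀ j, P S * (e j * r j) = if j ∈ S then P S * r j else 0 := fun j => by
    split_ifs with hj
    · rw [← mul_assoc, hP.mul_eq_of_mem hj]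
    · rw [← mul_assoc, hP.mul_eq_zero_of_notMem hj, zero_mul]
  rw [mul_sum, mul_sum, sum_congr rfl fun j _ => h j, sum_ite_mem, univ_inter]

theorem range_sum_mul_eq_iInf (hP : IsAtomResolution e P) (he : ∀ i j, Commute (e i) (e j))
    (her : ∀ i j, Commute (r j) (e i)) :
    (∑ j, e j * r j).range = ⨅ S, (∑ j ∈ S, r j).range.comap (P S : M →ₗ[R] M) := by
  set A := ∑ j, e j * r j
  have hT : ∀ S, Commute (∑ j ∈ S, r j) (P S) := fun S =>
    hP.commute S fun i => .sum_left _ _ _ fun j _ => her i j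
  have hA : ∀ S, Commute A (P S) := fun S =>
    hP.commute S fun i => .sum_left _ _ _ fun j _ => (he j i).mul_left (her i j)
  apply le_antisymm
  · rintro _ ⟨y, rfl⟩
    simp only [Submodule.mem_iInf, Submodule.mem_comap]
    exact fun S => ⟨P S y, congrArg (· y) ((hT S).eq.trans (hP.mul_sum_mul S).symm)⟩
  · intro x hx
    simp only [Submodule.mem_iInf, Submodule.mem_comap, LinearMap.mem_range,
      ContinuousLinearMap.coe_coe] at hx
    choose z hz using hx
    refine ⟨∑ S, P S (z S), ?_⟩
    calc A (∑ S, P S (z S)) = ∑ S, P S ((∑ j ∈ S, r j) (z S)) := by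
          simp only [map_sum]
          exact sum_congr rfl fun S _ =>
            congrArg (· (z S)) ((hA S).eq.trans (hP.mul_sum_mul S))
      _ = ∑ S, P S (P S x) := by simp only [hz]
      _ = ∑ S, P S x := by simp only [← mul_apply_eq_comp, (hP.isIdempotentElem _).eq]
      _ = x := by rw [← _root_.sum_apply, hP.sum_eq_one, one_apply_eq_self]

theorem sum_range_inf_range_le_iInf (hP : IsAtomResolution e P)
    (her : ∀ i j, Commute (r j) (e i))
    (hrT : ∀ S, ∀ j ∈ S, (r j).range ≤ (∑ i ∈ S, r i).range) :
    ∑ j, ((e j).range ⊓ (r j).range) ≤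
      ⨅ S, (∑ j ∈ S, r j).range.comap (P S : M →ₗ[R] M) := by
  refine sum_induction _ (· ≤ _) (fun _ _ => sup_le) bot_le fun j _ => ?_
  rintro x ⟨⟨y, rfl⟩, ⟨z, hz⟩⟩
  simp only [Submodule.mem_iInf, Submodule.mem_comap]
  intro S
  by_cases hj : j ∈ S
  · refine hrT S j hj ⟨P S z, ?_⟩
    simp only [ContinuousLinearMap.coe_coe] at hz ⊢
    rw [← hz, ← mul_apply_eq_comp, ← mul_apply_eq_comp, (hP.commute S fun i => her i j).eq]
  · have : P S (e j y) = 0 := by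
      rw [← mul_apply_eq_comp, hP.mul_eq_zero_of_notMem hj, zero_apply]
    simp [this]

end IsAtomResolution

end Range

section Hilbert

variable {𝕜 E : Type*} [RCLike 𝕜] [NormedAddCommGroup E] [InnerProductSpace 𝕜 E]
  [CompleteSpace E]

theorem IsStarProjection.re_inner_apply_self {p : E →L[𝕜] E} (hp : IsStarProjection p)
    (x : E) :
    RCLike.re (inner 𝕜 (p x) x) = ‖p x‖ ^ 2 := by
  have hpp : p (p x) = p x := congrArg (· x) hp.isIdempotentElem.eq
  nth_rw 1 [← hpp]
  rw [← ContinuousLinearMap.adjoint_inner_right, hp.isSelfAdjoint.adjoint_eq,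
    inner_self_eq_norm_sq]

theorem IsStarProjection.ker_sum_le_ker {ι : Type*} {p : ι → E →L[𝕜] E}
    (hp : ∀ i, IsStarProjection (p i)) {s : Finset ι} {j : ι} (hj : j ∈ s) :
    (∑ i ∈ s, p i).ker ≤ (p j).ker := by
  intro x hx
  have hsum : ∑ i ∈ s, ‖p i x‖ ^ 2 = 0 := by
    have := congrArg (fun y => RCLike.re (inner 𝕜 y x)) (LinearMap.mem_ker.1 hx)
    simpa [sum_inner, (hp _).re_inner_apply_self] using this
  simpa using (sum_eq_zero_iff_of_nonneg fun i _ => sq_nonneg ‖p i x‖).1 hsum j hj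

theorem ContinuousLinearMap.range_le_range_of_ker_le_ker {S T : E →L[𝕜] E}
    (hS : IsSelfAdjoint S) (hT : IsSelfAdjoint T) (hTc : IsClosed (Set.range T))
    (h : T.ker ≤ S.ker) : S.range ≤ T.range := by
  have hTc' : IsClosed (T.range : Set E) := by
    rwa [LinearMap.coe_range]
  calc S.range ≤ S.range.topologicalClosure := Submodule.le_topologicalClosure _
    _ = S.kerᗮ := by rw [S.orthogonal_ker, hS.adjoint_eq]
    _ ≤ T.kerᗮ := Submodule.orthogonal_le h
    _ = T.range := by
      rw [T.orthogonal_ker, hT.adjoint_eq, hTc'.submodule_topologicalClosure_eq]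

end Hilbert

/-- Let `Q₁, …, Qₙ` be pairwise commuting orthogonal projections and
`R₁, …, Rₙ` orthogonal projections on a complex Hilbert space, with `Rⱼ Qᵢ = Qᵢ Rⱼ` for
all `i, j`. If for every subset `S ⊆ {1, …, n}` the operator `∑_{j ∈ S} Rⱼ` has closed
range, then `Q₁ R₁ + ⋯ + Qₙ Rₙ` has closed range; equivalently, the algebraic sum of the
closed subspaces `ran Qᵢ ∩ ran Rᵢ` is closed. -/
theorem stmt_18 {H : Type*} [NormedAddCommGroup H] [InnerProductSpace ℂ H] [CompleteSpace H]
    {n : ℕ} (Q R : Fin n → H →L[ℂ] H)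
    (hQ : ∀ i, IsSelfAdjoint (Q i) ∧ IsIdempotentElem (Q i))
    (hQcomm : ∀ i j : Fin n, Q i * Q j = Q j * Q i)
    (hR : ∀ j, IsSelfAdjoint (R j) ∧ IsIdempotentElem (R j))
    (hQR : ∀ i j : Fin n, R j * Q i = Q i * R j)
    (hSr : ∀ S : Finset (Fin n), IsClosed (Set.range ⇑(∑ j ∈ S, R j))) :
    IsClosed (Set.range ⇑(∑ j, Q j * R j)) ∧
    IsClosed ((∑ j, (LinearMap.range (Q j : H →ₗ[ℂ] H) ⊓ LinearMap.range (R j : H →ₗ[ℂ] H)) :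
      Submodule ℂ H) : Set H) := by
  obtain ⟨P, hP⟩ := exists_isAtomResolution hQcomm fun i => (hQ i).2
  have hRT : ∀ S, ∀ j ∈ S, (R j).range ≤ (∑ i ∈ S, R i).range := fun S j hj =>
    ContinuousLinearMap.range_le_range_of_ker_le_ker (hR j).1
      (isSelfAdjoint_sum S fun i _ => (hR i).1) (hSr S)
      (IsStarProjection.ker_sum_le_ker (fun i => ⟨(hR i).2, (hR i).1⟩) hj)
  have hrange := hP.range_sum_mul_eq_iInf hQcomm hQR
  have hclosed : IsClosed ((∑ j, Q j * R j).range : Set H) := by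
    rw [hrange, Submodule.coe_iInf]
    exact isClosed_iInter fun S => (hSr S).preimage (P S).continuous
  have hsum := le_antisymm (hP.sum_range_inf_range_le_iInf hQR hRT)
    (hrange ▸ range_sum_mul_le_sum_range_inf_range fun j => hQR j j)
  refine ⟨by rwa [LinearMap.coe_range] at hclosed, ?_⟩
  rwa [hsum, ← hrange]
end
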